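/- For the ESEP distribution with fixed α, the determinant of the 3×3 Fisher information matrix for (θ,σ,ε) is n³α²·(Γ(1−1/α)Γ(1+1/α)α² − Γ(1−1/α)Γ(1+1/α) − α²)·(−α²Γ(1+1/α) − αΓ(1+1/α) + Γ(1/α)) / (−2 σ⁴ Γ(1/α)³ (1−ε²)²); for α = 2 this specializes to det = 2n³(3π−8)/(σ⁴π(1−ε²)²), which is finite and positive for σ > 0, ε ∈ (−1,1), n > 0. -/

import Mathlib

open Real

/-- The Fisher information matrix of ESEP(θ,σ,ε,α) for (θ,σ,ε), scaled by sample size n. -/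
noncomputable def esepFisher (n α σ ε : ℝ) : Matrix (Fin 3) (Fin 3) ℝ :=
  n • !![α * (α - 1) * Real.Gamma (1 - 1 / α) / (2 * σ ^ 2 * Real.Gamma (1 / α) * (1 - ε ^ 2)), 0,
        α ^ 2 / (Real.sqrt 2 * σ * Real.Gamma (1 / α) * (1 - ε ^ 2));
      0, -1 / σ ^ 2 + α * (α + 1) * Real.Gamma (1 + 1 / α) / (Real.Gamma (1 / α) * σ ^ 2), 0;
      α ^ 2 / (Real.sqrt 2 * σ * Real.Gamma (1 / α) * (1 - ε ^ 2)), 0,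
        α * (α + 1) * Real.Gamma (1 + 1 / α) / (Real.Gamma (1 / α) * (1 - ε ^ 2))]

/-!
The parameter σ is orthogonal to θ and ε, so the determinant factors as
I_σσ · (I_θθ I_εε − I_θε²), a rational expression in Γ(1/α), Γ(1 ± 1/α) and √2. At α = 2 these
Gamma values are √π, √π/2 and √π, and positivity reduces to π > 8/3.
-/

theorem Matrix.det_fin_three_of_middle_decoupled {R : Type*} [CommRing R] (a b b' c d : R) :
    !![a, 0, b; 0, c, 0; b', 0, d].det = c * (a * d - b * b') := by
  simp only [Matrix.det_fin_three, Matrix.of_apply, Matrix.cons_val', Matrix.cons_val_zero,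
    Matrix.cons_val_fin_one, Matrix.cons_val_one, Matrix.cons_val, mul_zero, sub_zero, zero_mul,
    add_zero]
  ring

theorem Real.Gamma_three_div_two : Gamma (3 / 2) = √π / 2 := by
  rw [show (3 / 2 : ℝ) = 1 / 2 + 1 by norm_num, Gamma_add_one (by norm_num), Gamma_one_half_eq]
  ring

theorem esepFisher_det_eq (n α σ ε : ℝ) (hα : 0 < α) (hσ : σ ≠ 0) (hε : 1 - ε ^ 2 ≠ 0) :
    (esepFisher n α σ ε).det =
      n ^ 3 * α ^ 2 *
          (Gamma (1 - 1 / α) * Gamma (1 + 1 / α) * α ^ 2 -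
            Gamma (1 - 1 / α) * Gamma (1 + 1 / α) - α ^ 2) *
          (-α ^ 2 * Gamma (1 + 1 / α) - α * Gamma (1 + 1 / α) + Gamma (1 / α)) /
        (-2 * σ ^ 4 * Gamma (1 / α) ^ 3 * (1 - ε ^ 2) ^ 2) := by
  have hG : Gamma (1 / α) ≠ 0 := (Gamma_pos_of_pos (by positivity)).ne'
  have hsqrt2 : √2 ^ 2 = 2 := sq_sqrt zero_le_two
  rw [esepFisher, Matrix.det_smul, Fintype.card_fin, Matrix.det_fin_three_of_middle_decoupled]
  field_simp
  rw [hsqrt2]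
  ring

theorem esepFisher_two_det_eq (n σ ε : ℝ) (hσ : σ ≠ 0) (hε : 1 - ε ^ 2 ≠ 0) :
    (esepFisher n 2 σ ε).det = 2 * n ^ 3 * (3 * π - 8) / (σ ^ 4 * π * (1 - ε ^ 2) ^ 2) := by
  have hsqrtπ : √π ^ 2 = π := sq_sqrt pi_pos.le
  have hsqrtπ0 : √π ≠ 0 := (sqrt_pos.mpr pi_pos).ne'
  rw [esepFisher_det_eq n 2 σ ε two_pos hσ hε]
  norm_num [Gamma_one_half_eq, Gamma_three_div_two]
  field_simp
  rw [hsqrtπ]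
  ring

theorem esep_fisher_det (n α σ ε : ℝ) (hn : 0 < n) (hα : 0 < α) (hσ : 0 < σ)
    (hε : ε ∈ Set.Ioo (-1 : ℝ) 1) :
    Matrix.det (esepFisher n α σ ε) =
      n ^ 3 * α ^ 2 *
          (Real.Gamma (1 - 1 / α) * Real.Gamma (1 + 1 / α) * α ^ 2 -
            Real.Gamma (1 - 1 / α) * Real.Gamma (1 + 1 / α) - α ^ 2) *
          (-α ^ 2 * Real.Gamma (1 + 1 / α) - α * Real.Gamma (1 + 1 / α) + Real.Gamma (1 / α)) /
        (-2 * σ ^ 4 * Real.Gamma (1 / α) ^ 3 * (1 - ε ^ 2) ^ 2) ∧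
    (α = 2 →
      Matrix.det (esepFisher n α σ ε) = 2 * n ^ 3 * (3 * Real.pi - 8) /
          (σ ^ 4 * Real.pi * (1 - ε ^ 2) ^ 2) ∧
      0 < 2 * n ^ 3 * (3 * Real.pi - 8) / (σ ^ 4 * Real.pi * (1 - ε ^ 2) ^ 2)) := by
  have hε' : 0 < 1 - ε ^ 2 := by nlinarith [hε.1, hε.2]
  refine ⟨esepFisher_det_eq n α σ ε hα hσ.ne' hε'.ne', ?_⟩
  rintro rfl
  have h3π : 0 < 3 * π - 8 := by linarith [pi_gt_three]
  exact ⟨esepFisher_two_det_eq n σ ε hσ.ne' hε'.ne', by positivity⟩
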